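/- Let g be a finite-dimensional Lie algebra over an algebraically closed field K of characteristic p > 0. Then every simple module over the universal enveloping algebra U(g) is finite-dimensional as a K-vector space. -/

import Mathlib

/-!
For a basis vector `x` of `L`, the powers `(ad x)^(p^k)` are linearly dependent, so `ad x` satisfies
a monic `p`-polynomial `g`. Since `(ad a)^(p^k) = ad (a^(p^k))` in characteristic `p`, the element
`g(x)` of `U(L)` commutes with `L`, hence is central. Every basis vector is thus integral over the
central image of a polynomial ring `R`, and `U(L)` is a finite `R`-module: modulo shorter words the
letters of a word commute, so each word reduces to words with boundedly many copies of each letter.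
A simple `U(L)`-module `M` is then finite over `R`. For a maximal ideal `𝔪` with `𝔪M ≠ M`, the
submodule `𝔪M` is `U(L)`-stable, hence zero; so `M` is finite over `R/𝔪`, which is finite over `K`
by Zariski's lemma.
-/

open Polynomial Submodule

attribute [local instance] LieRing.ofAssociativeRing

section Words

variable (R : Type*) {A ι : Type*} [CommRing R] [Ring A] [Algebra R A] (X : ι → A)

def wordSpan (n : ℕ) : Submodule R A :=
  span R ((fun w : List ι => (w.map X).prod) '' {w | w.length < n})

variable {R X}

lemma prod_mem_wordSpan {w : List ι} {n : ℕ} (h : w.length < n) :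
    (w.map X).prod ∈ wordSpan R X n :=
  subset_span ⟨w, h, rfl⟩

lemma mul_mem_wordSpan_succ (i : ι) {a : A} {n : ℕ} (ha : a ∈ wordSpan R X n) :
    X i * a ∈ wordSpan R X (n + 1) := by
  have : wordSpan R X n ≤ (wordSpan R X (n + 1)).comap (LinearMap.mulLeft R (X i)) :=
    span_le.mpr <| by
      rintro _ ⟨w, hw, rfl⟩
      simpa using prod_mem_wordSpan (w := i :: w) (X := X) (by simpa using hw)
  exact this ha

lemma mul_prod_mem_wordSpan {c : A} (hc : c ∈ span R (Set.range X)) (w : List ι) :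
    c * (w.map X).prod ∈ wordSpan R X (w.length + 2) := by
  have : span R (Set.range X) ≤
      (wordSpan R X (w.length + 2)).comap (LinearMap.mulRight R (w.map X).prod) :=
    span_le.mpr <| by
      rintro _ ⟨i, rfl⟩
      simpa using prod_mem_wordSpan (w := i :: w) (X := X) (by simp)
  exact this hc

lemma prod_sub_prod_mem_wordSpan_of_perm
    (hX : ∀ i j, X i * X j - X j * X i ∈ span R (Set.range X)) {w w' : List ι}
    (h : w.Perm w') : (w.map X).prod - (w'.map X).prod ∈ wordSpan R X w.length := by
  induction h with
  | nil => simp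
  | cons i _ ih => simpa [mul_sub] using mul_mem_wordSpan_succ i ih
  | swap i j w => simpa [sub_mul, mul_assoc] using mul_prod_mem_wordSpan (hX j i) w
  | trans h₁ _ ih₁ ih₂ =>
    rw [← sub_add_sub_cancel]
    exact add_mem ih₁ (h₁.length_eq ▸ ih₂)

lemma prod_mem_span_prod_of_count_lt (hX : ∀ i j, X i * X j - X j * X i ∈ span R (Set.range X))
    [DecidableEq ι] (q : ι → ℕ)
    (hq : ∀ i, X i ^ q i ∈ span R (Set.range fun j : Fin (q i) => X i ^ (j : ℕ))) (w : List ι) :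
    (w.map X).prod ∈
      span R ((fun w : List ι => (w.map X).prod) '' {w | ∀ i, w.count i < q i}) := by
  induction hn : w.length using Nat.strong_induction_on generalizing w with
  | _ n ih =>
    have hshort : wordSpan R X n ≤
        span R ((fun w : List ι => (w.map X).prod) '' {w | ∀ i, w.count i < q i}) :=
      span_le.mpr <| by
        rintro _ ⟨v, hv, rfl⟩
        exact ih _ hv v rfl
    by_cases hw : ∀ i, w.count i < q i
    · exact subset_span ⟨w, hw, rfl⟩
    simp only [not_forall, not_lt] at hw
    obtain ⟨i, hi⟩ := hw
    obtain ⟨v, hv⟩ := (List.replicate_sublist_iff.mpr hi).exists_perm_append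
    have hlen : n = q i + v.length := by simp [← hn, hv.length_eq]
    have hpow : span R (Set.range fun j : Fin (q i) => X i ^ (j : ℕ)) ≤
        (wordSpan R X n).comap (LinearMap.mulRight R (v.map X).prod) :=
      span_le.mpr <| by
        rintro _ ⟨j, rfl⟩
        simpa using prod_mem_wordSpan (w := List.replicate j i ++ v) (X := X)
          (by simp; omega)
    have hsplit : (w.map X).prod = ((w.map X).prod - ((List.replicate (q i) i ++ v).map X).prod)
        + X i ^ q i * (v.map X).prod := by simp
    rw [hsplit]
    exact add_mem (hshort (hn ▸ prod_sub_prod_mem_wordSpan_of_perm hX hv)) (hshort (hpow (hq i)))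

lemma List.finite_setOf_forall_count_lt [Fintype ι] [DecidableEq ι] (q : ι → ℕ) :
    {w : List ι | ∀ i, w.count i < q i}.Finite := by
  refine (List.finite_length_le ι (∑ i, q i)).subset fun w hw => ?_
  have : w.length = ∑ i, w.count i := by
    simpa using (Multiset.sum_count_eq_card (s := .univ) (m := (w : Multiset ι)) (by simp)).symm
  rw [Set.mem_ofPred_eq, this]
  exact Finset.sum_le_sum fun i _ => (hw i).le

variable (X) in
theorem Algebra.finite_of_isIntegral_of_commutator_mem_span [Nontrivial R] [Finite ι]
    (hgen : Algebra.adjoin R (Set.range X) = ⊤)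
    (hX : ∀ i j, X i * X j - X j * X i ∈ span R (Set.range X)) (hint : ∀ i, IsIntegral R (X i)) :
    Module.Finite R A := by
  classical
  have := Fintype.ofFinite ι
  let q i := (minpoly R (X i)).natDegree
  have hq i : X i ^ q i ∈ span R (Set.range fun j : Fin (q i) => X i ^ (j : ℕ)) :=
    (hint i).mem_span_pow ⟨Polynomial.X ^ q i, by simp⟩
  rw [Module.finite_def, Submodule.fg_def]
  refine ⟨_, (List.finite_setOf_forall_count_lt q).image fun w => (w.map X).prod, ?_⟩
  refine eq_top_iff'.mpr fun a => ?_
  have ha : a ∈ Subalgebra.toSubmodule (Algebra.adjoin R (Set.range X)) := by simp [hgen]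
  rw [Algebra.adjoin_eq_span] at ha
  refine span_le.mpr ?_ ha
  intro b hb
  obtain ⟨w, rfl⟩ : b ∈ MonoidHom.mrange (FreeMonoid.lift X) :=
    Submonoid.closure_le.mpr (by rintro _ ⟨i, rfl⟩; exact ⟨FreeMonoid.of i, by simp⟩) hb
  simpa [FreeMonoid.lift_apply] using prod_mem_span_prod_of_count_lt hX q hq w.toList

end Words

lemma IsNoetherian.exists_mem_span_range_fin {R M : Type*} [Semiring R] [AddCommMonoid M]
    [Module R M] [IsNoetherian R M] (v : ℕ → M) :
    ∃ n, v n ∈ span R (Set.range fun i : Fin n => v i) := by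
  obtain ⟨n, hn⟩ := monotone_stabilizes_iff_noetherian.mpr ‹_›
    ⟨fun n => span R (v '' Set.Iio n),
      fun _ _ h => span_mono (Set.image_mono (Set.Iio_subset_Iio h))⟩
  refine ⟨n, ?_⟩
  have h : v n ∈ span R (v '' Set.Iio (n + 1)) := subset_span ⟨n, by simp, rfl⟩
  rw [← show span R (v '' Set.Iio n) = span R (v '' Set.Iio (n + 1)) from hn _ n.le_succ] at h
  convert h using 2
  ext
  simp [Fin.exists_iff]

lemma Polynomial.monic_X_pow_sub_sum_C_mul_X_pow {R ι : Type*} [Ring R] [Nontrivial R]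
    [Fintype ι] {n : ℕ} (c : ι → R) (e : ι → ℕ) (he : ∀ i, e i < n) :
    (X ^ n - ∑ i, C (c i) * X ^ e i).Monic ∧ (X ^ n - ∑ i, C (c i) * X ^ e i).natDegree = n := by
  have hlt : (∑ i, C (c i) * X ^ e i).degree < (X ^ n : R[X]).degree := by
    rw [degree_X_pow]
    refine (degree_sum_le _ _).trans_lt <| (Finset.sup_lt_iff (WithBot.bot_lt_coe _)).mpr fun i _ =>
      (degree_C_mul_X_pow_le _ _).trans_lt (WithBot.coe_lt_coe.mpr (he i))
  refine ⟨monic_X_pow_sub (by simpa using hlt), ?_⟩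
  rw [natDegree_eq_of_degree_eq (degree_sub_eq_left_of_degree_lt hlt), natDegree_X_pow]

section Adjoint

variable (K : Type*) [Field K]

lemma LieAlgebra.ad_pow_char_pow (p : ℕ) [Fact p.Prime] [CharP K p] {A : Type*} [Ring A]
    [Algebra K A] [Nontrivial A] (a : A) (k : ℕ) :
    LieAlgebra.ad K A a ^ p ^ k = LieAlgebra.ad K A (a ^ p ^ k) := by
  have : CharP (Module.End K A) p := charP_of_injective_algebraMap' K p
  simp only [LieAlgebra.ad_eq_lmul_left_sub_lmul_right, Pi.sub_apply]
  rw [sub_pow_char_pow_of_commute p k (LinearMap.commute_mulLeft_right a a),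
    LinearMap.pow_mulLeft, LinearMap.pow_mulRight]

variable {K} {L A : Type*} [LieRing L] [LieAlgebra K L] [Ring A] [Algebra K A]

lemma LieHom.ad_pow_apply (φ : L →ₗ⁅K⁆ A) (x y : L) (k : ℕ) :
    (LieAlgebra.ad K A (φ x) ^ k) (φ y) = φ ((LieAlgebra.ad K L x ^ k) y) := by
  have h : LieAlgebra.ad K A (φ x) ∘ₗ (φ : L →ₗ[K] A) = (φ : L →ₗ[K] A) ∘ₗ LieAlgebra.ad K L x := by
    ext y
    simp
  exact LinearMap.congr_fun (Module.End.commute_pow_left_of_commute h k) y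

lemma LieHom.exists_monic_commute_aeval (p : ℕ) [Fact p.Prime] [CharP K p] [Module.Finite K L]
    [Nontrivial A] (φ : L →ₗ⁅K⁆ A) (x : L) :
    ∃ g : K[X], g.Monic ∧ 0 < g.natDegree ∧ ∀ y, Commute (aeval (φ x) g) (φ y) := by
  have hp := (Fact.out : p.Prime).one_lt
  obtain ⟨N, hN⟩ :=
    IsNoetherian.exists_mem_span_range_fin (R := K) fun k => LieAlgebra.ad K L x ^ p ^ k
  obtain ⟨c, hc⟩ := (mem_span_range_iff_exists_fun K).mp hN
  obtain ⟨hmonic, hdeg⟩ := monic_X_pow_sub_sum_C_mul_X_pow c (fun i : Fin N => p ^ (i : ℕ))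
    fun i => Nat.pow_lt_pow_right hp i.2
  refine ⟨_, hmonic, by rw [hdeg]; positivity, fun y => ?_⟩
  have haeval : aeval (φ x) (X ^ p ^ N - ∑ i, C (c i) * X ^ p ^ (i : ℕ)) =
      φ x ^ p ^ N - ∑ i, c i • φ x ^ p ^ (i : ℕ) := by
    simp [Algebra.smul_def]
  have hcomm : LieAlgebra.ad K A (φ x ^ p ^ N - ∑ i, c i • φ x ^ p ^ (i : ℕ)) (φ y) = 0 := by
    simp only [map_sub, map_sum, map_smul, ← LieAlgebra.ad_pow_char_pow K p, LinearMap.sub_apply,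
      LinearMap.sum_apply, LinearMap.smul_apply, LieHom.ad_pow_apply]
    simp [← hc, map_sum]
  rw [haeval]
  rwa [LieAlgebra.ad_apply, LieRing.of_associative_ring_bracket, sub_eq_zero] at hcomm

end Adjoint

lemma IsIntegral.of_aeval_eq_algebraMap {K R A : Type*} [CommRing K] [CommRing R] [Nontrivial R]
    [Ring A] [Algebra K R] [Algebra R A] [Algebra K A] [IsScalarTower K R A] {a : A} {g : K[X]}
    (hg : g.Monic) (hdeg : 0 < g.natDegree) {r : R} (h : aeval a g = algebraMap R A r) :
    IsIntegral R a := by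
  refine ⟨g.map (algebraMap K R) - C r, (hg.map _).sub_of_left ?_, by
    rw [← aeval_def, map_sub, aeval_map_algebraMap, h, aeval_C, sub_self]⟩
  rw [hg.degree_map]
  exact degree_C_le.trans_lt (natDegree_pos_iff_degree_pos.mp hdeg)

lemma IsSimpleModule.smul_eq_zero_of_forall_smul_mem {R A M : Type*} [Ring A] [AddCommGroup M]
    [Module A M] [IsSimpleModule A M] [Semiring R] [Module R M] [SMulCommClass R A M]
    {N : Submodule R M} (hN : N ≠ ⊤) {r : R} (hr : ∀ m : M, r • m ∈ N) (m : M) : r • m = 0 := by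
  have hne : LinearMap.range (DistribSMul.toLinearMap A M r) ≠ ⊤ := fun htop =>
    hN <| Submodule.eq_top_iff'.mpr fun n => by
      obtain ⟨n', rfl⟩ := LinearMap.range_eq_top.mp htop n
      exact hr n'
  have hbot := (eq_bot_or_eq_top _).resolve_right hne
  exact (Submodule.mem_bot A).mp (hbot ▸ LinearMap.mem_range_self _ m)

theorem Module.finite_of_isSimpleModule (K R A M : Type*) [Field K] [CommRing R] [Algebra K R]
    [Algebra.FiniteType K R] [Ring A] [Algebra R A] [Module.Finite R A] [AddCommGroup M]
    [Module A M] [IsSimpleModule A M] [Module R M] [IsScalarTower R A M] [Module K M]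
    [IsScalarTower K R M] : Module.Finite K M := by
  have : Module.Finite R M := Module.Finite.trans A M
  have : Nontrivial M := IsSimpleModule.nontrivial A M
  obtain ⟨N, hN, -⟩ := (eq_top_or_exists_le_coatom (⊥ : Submodule R M)).resolve_left bot_ne_top
  have : IsSimpleModule R (M ⧸ N) := isSimpleModule_iff_isCoatom.mpr hN
  set 𝔪 := Module.annihilator R (M ⧸ N)
  have : 𝔪.IsMaximal := IsSimpleModule.annihilator_isMaximal
  have h𝔪 (r : R) (hr : r ∈ 𝔪) (m : M) : r • m ∈ N :=
    (Submodule.Quotient.mk_eq_zero N).mp (Module.mem_annihilator.mp hr (Submodule.Quotient.mk m))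
  have hM : Module.IsTorsionBySet R M 𝔪 := fun m r =>
    IsSimpleModule.smul_eq_zero_of_forall_smul_mem (A := A) hN.1 (h𝔪 r r.2) m
  let := hM.module
  let := Ideal.Quotient.field 𝔪
  have : Module.Finite K (R ⧸ 𝔪) := finite_of_finite_type_of_isJacobsonRing K _
  have : Module.Finite (R ⧸ 𝔪) M := Module.Finite.of_restrictScalars_finite R _ M
  exact Module.Finite.trans (R ⧸ 𝔪) M

namespace UniversalEnvelopingAlgebra

variable (K L : Type*) [Field K] [LieRing L] [LieAlgebra K L]

instance : Nontrivial (UniversalEnvelopingAlgebra K L) :=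
  ((lift K (0 : L →ₗ⁅K⁆ K) : UniversalEnvelopingAlgebra K L →ₐ[K] K) : _ →+* K).domain_nontrivial

lemma adjoin_range_ι :
    Algebra.adjoin K (Set.range (ι K : L → UniversalEnvelopingAlgebra K L)) = ⊤ := by
  rw [← (AlgHom.range_eq_top (mkAlgHom K L)).mpr (RingCon.mkₐ_surjective _), ← Algebra.map_top,
    ← TensorAlgebra.adjoin_range_ι, AlgHom.map_adjoin, ← Set.range_comp]
  rfl

variable {K L}

lemma exists_monic_aeval_ι_mem_center (p : ℕ) [Fact p.Prime] [CharP K p] [Module.Finite K L]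
    (x : L) : ∃ g : K[X], g.Monic ∧ 0 < g.natDegree ∧
      aeval (ι K x) g ∈ Subalgebra.center K (UniversalEnvelopingAlgebra K L) := by
  obtain ⟨g, hmonic, hdeg, hcomm⟩ := (ι K : L →ₗ⁅K⁆ _).exists_monic_commute_aeval p x
  refine ⟨g, hmonic, hdeg, Subalgebra.mem_center_iff.mpr fun u => ?_⟩
  have hu : u ∈ Algebra.adjoin K (Set.range (ι K : L → UniversalEnvelopingAlgebra K L)) := by
    simp [adjoin_range_ι]
  refine (Algebra.commute_of_mem_adjoin_of_forall_mem_commute hu ?_).symm.eq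
  rintro _ ⟨y, rfl⟩
  exact hcomm y

theorem finite_of_isIntegral {κ R : Type*} [Finite κ] [CommRing R] [Nontrivial R] [Algebra K R]
    [Algebra R (UniversalEnvelopingAlgebra K L)]
    [IsScalarTower K R (UniversalEnvelopingAlgebra K L)]
    (b : Module.Basis κ K L) (h : ∀ i, IsIntegral R (ι K (b i))) :
    Module.Finite R (UniversalEnvelopingAlgebra K L) := by
  set X : κ → UniversalEnvelopingAlgebra K L := fun i => ι K (b i)
  have hspan (y : L) : ι K y ∈ span R (Set.range X) := by
    refine span_le_restrictScalars K R _ ?_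
    have : span K (Set.range X) = (span K (Set.range b)).map (ι K : L →ₗ⁅K⁆ _).toLinearMap := by
      rw [map_span, ← Set.range_comp]
      rfl
    rw [this, b.span_eq]
    exact mem_map_of_mem mem_top
  refine Algebra.finite_of_isIntegral_of_commutator_mem_span X ?_ (fun i j => ?_) h
  · have hle : Algebra.adjoin K (Set.range (ι K : L → _)) ≤
        (Algebra.adjoin R (Set.range X)).restrictScalars K :=
      Algebra.adjoin_le <| by
        rintro _ ⟨y, rfl⟩
        exact Algebra.span_le_adjoin R _ (hspan y)
    exact eq_top_iff.mpr fun u _ => hle (by simp [adjoin_range_ι])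
  · rw [← LieRing.of_associative_ring_bracket, ← LieHom.map_lie]
    exact hspan _

end UniversalEnvelopingAlgebra

open UniversalEnvelopingAlgebra

theorem finiteDimensional_of_isSimpleModule_universalEnvelopingAlgebra_general
    (K : Type*) [Field K] (p : ℕ) [CharP K p] (hp : 0 < p)
    (L : Type*) [LieRing L] [LieAlgebra K L] [Module.Finite K L]
    (M : Type*) [AddCommGroup M] [Module K M]
    [Module (UniversalEnvelopingAlgebra K L) M]
    [IsScalarTower K (UniversalEnvelopingAlgebra K L) M]
    [IsSimpleModule (UniversalEnvelopingAlgebra K L) M] :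
    FiniteDimensional K M := by
  have : Fact p.Prime := ⟨(CharP.char_is_prime_or_zero K p).resolve_right hp.ne'⟩
  let U := UniversalEnvelopingAlgebra K L
  let b := Module.finBasis K L
  choose g hmonic hdeg hcenter using fun i => exists_monic_aeval_ι_mem_center (K := K) p (b i)
  let R := MvPolynomial (Fin (Module.finrank K L)) K
  let ζ i : Subalgebra.center K U := ⟨_, hcenter i⟩
  let φ : R →ₐ[K] U := (Subalgebra.center K U).val.comp (MvPolynomial.aeval ζ)
  let : Algebra R U := φ.toRingHom.toAlgebra' fun r u =>
    (Subalgebra.mem_center_iff.mp (MvPolynomial.aeval ζ r).2 u).symm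
  have : IsScalarTower K R U := IsScalarTower.of_algebraMap_eq fun k => (φ.commutes k).symm
  have : Module.Finite R U := finite_of_isIntegral b fun i =>
    IsIntegral.of_aeval_eq_algebraMap (hmonic i) (hdeg i) (r := MvPolynomial.X i)
      (congrArg Subtype.val (MvPolynomial.aeval_X ζ i)).symm
  let : Module R M := Module.compHom M (algebraMap R U)
  have : IsScalarTower R U M := IsScalarTower.of_compHom R U M
  have : IsScalarTower K R M := .to₁₂₄ K R U M
  exact Module.finite_of_isSimpleModule K R U M

/-- Over an algebraically closed field of characteristic `p > 0`, every simple module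
over the universal enveloping algebra of a finite-dimensional Lie algebra is
finite-dimensional. -/
theorem finiteDimensional_of_isSimpleModule_universalEnvelopingAlgebra
    (K : Type*) [Field K] [IsAlgClosed K] (p : ℕ) [CharP K p] (hp : 0 < p)
    (L : Type*) [LieRing L] [LieAlgebra K L] [Module.Finite K L]
    (M : Type*) [AddCommGroup M] [Module K M]
    [Module (UniversalEnvelopingAlgebra K L) M]
    [IsScalarTower K (UniversalEnvelopingAlgebra K L) M]
    [IsSimpleModule (UniversalEnvelopingAlgebra K L) M] :
    FiniteDimensional K M :=
  finiteDimensional_of_isSimpleModule_universalEnvelopingAlgebra_general K p hp L M
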